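/- arXiv:2505.06996 — 2 statements merged into one kernel-verified Lean document; each statement's English description precedes it below -/
import Mathlib

section
/- Let A be an unbounded operator on a complex Hilbert space H, let x ∈ Dom A with x ≠ 0, and let x₁, …, xₙ ∈ H be such that Dom A ∩ span{Ax, x₁, …, xₙ} = {0}. Set 𝒢 := span{x, Ax, x₁, …, xₙ}. Then 𝒢 ∩ Dom A = ℂ·x and A(𝒢 ∩ Dom A) ⊆ 𝒢; in particular 𝒢 is invariant for A in the sense of Akhiezer–Glazman (A[𝒢 ∩ Dom A] ⊆ 𝒢). -/
noncomputable section

/-- Let `A` be an unbounded operator on a complex Hilbert space `H`, let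
`x ∈ Dom A`, `x ≠ 0`, and let `x₁, …, xₙ ∈ H` satisfy `Dom A ∩ span {A x, x₁, …, xₙ} = {0}`.
Then for `𝒢 := span {x, A x, x₁, …, xₙ}` one has `𝒢 ∩ Dom A = ℂ·x` and
`A (𝒢 ∩ Dom A) ⊆ 𝒢`; in particular `𝒢` is invariant for `A` in the sense of
Akhiezer–Glazman. -/
theorem span_with_image_is_AG_invariant
    {H : Type*} [NormedAddCommGroup H] [InnerProductSpace ℂ H]
    (A : H →ₗ.[ℂ] H) (x : H) (hx : x ∈ A.domain) (hx0 : x ≠ 0)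
    {n : ℕ} (xs : Fin n → H)
    (hdisj : A.domain ⊓ Submodule.span ℂ ({A ⟨x, hx⟩} ∪ Set.range xs) = ⊥) :
    Submodule.span ℂ ({x, A ⟨x, hx⟩} ∪ Set.range xs) ⊓ A.domain = Submodule.span ℂ {x} ∧
      ∀ y : A.domain, (y : H) ∈ Submodule.span ℂ ({x, A ⟨x, hx⟩} ∪ Set.range xs) →
        A y ∈ Submodule.span ℂ ({x, A ⟨x, hx⟩} ∪ Set.range xs) := by
  set S : Set H := {A ⟨x, hx⟩} ∪ Set.range xs with hS
  have hset : ({x, A ⟨x, hx⟩} ∪ Set.range xs : Set H) = insert x S := by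
    simp [hS, Set.insert_union]
  have hG : Submodule.span ℂ ({x, A ⟨x, hx⟩} ∪ Set.range xs)
      = Submodule.span ℂ {x} ⊔ Submodule.span ℂ S := by
    rw [hset, Submodule.span_insert]
  have key : ∀ y : H, y ∈ Submodule.span ℂ ({x, A ⟨x, hx⟩} ∪ Set.range xs) →
      y ∈ A.domain → y ∈ Submodule.span ℂ ({x} : Set H) := by
    intro y hyG hyD
    rw [hG] at hyG
    obtain ⟨u, hu, v, hv, rfl⟩ := Submodule.mem_sup.mp hyG
    obtain ⟨c, rfl⟩ := Submodule.mem_span_singleton.mp hu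
    have huD : c • x ∈ A.domain := A.domain.smul_mem c hx
    have hvD : v ∈ A.domain := by
      have := A.domain.sub_mem hyD huD
      simpa using this
    have hv0 : v = 0 := by
      have : v ∈ A.domain ⊓ Submodule.span ℂ S := ⟨hvD, hv⟩
      rw [hdisj] at this
      simpa using this
    rw [hv0, add_zero]
    exact Submodule.mem_span_singleton.mpr ⟨c, rfl⟩
  constructor
  · apply le_antisymm
    · rintro y ⟨hyG, hyD⟩
      exact key y hyG hyD
    · intro y hy
      refine ⟨?_, ?_⟩
      · exact Submodule.span_mono (by rw [hset]; exact Set.singleton_subset_iff.mpr (Set.mem_insert _ _)) hy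
      · obtain ⟨c, rfl⟩ := Submodule.mem_span_singleton.mp hy
        exact A.domain.smul_mem c hx
  · intro y hy
    obtain ⟨c, hc⟩ := Submodule.mem_span_singleton.mp (key y hy y.2)
    have hy' : y = c • (⟨x, hx⟩ : A.domain) := by
      apply Subtype.ext
      simpa using hc.symm
    rw [hy', A.map_smul]
    exact Submodule.smul_mem _ c (Submodule.subset_span (Or.inl (Set.mem_insert_of_mem _ rfl)))
end
end

section
/- Let A be an unbounded operator on a complex Hilbert space H, let x ∈ Dom A with x ≠ 0, let x₁, …, xₙ ∈ H satisfy Dom A ∩ span{Ax, x₁, …, xₙ} = {0}, and assume Ax ∉ ℂ·x. Then the finite-dimensional subspace 𝒢 := span{x, Ax, x₁, …, xₙ} is invariant for A in the sense of Akhiezer–Glazman (A[𝒢 ∩ Dom A] ⊆ 𝒢), yet 𝒢 contains no eigenvector of A: there is no y ∈ 𝒢 ∩ Dom A with y ≠ 0 and A y = λ y for some λ ∈ ℂ. (This refutes the claim in Akhiezer–Glazman that every finite-dimensional invariant subspace contains an eigenvector.) -/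
noncomputable section

/-- Let `A` be an unbounded operator on a complex Hilbert space `H`, let
`x ∈ Dom A`, `x ≠ 0`, let `x₁, …, xₙ ∈ H` satisfy `Dom A ∩ span {A x, x₁, …, xₙ} = {0}`,
and assume `A x ∉ ℂ·x`. Then the finite-dimensional subspace
`𝒢 := span {x, A x, x₁, …, xₙ}` is invariant for `A` in the sense of Akhiezer–Glazman, yet
`𝒢` contains no eigenvector of `A`. -/
theorem AG_invariant_without_eigenvector
    {H : Type*} [NormedAddCommGroup H] [InnerProductSpace ℂ H]
    (A : H →ₗ.[ℂ] H) (x : H) (hx : x ∈ A.domain) (hx0 : x ≠ 0)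
    {n : ℕ} (xs : Fin n → H)
    (hdisj : A.domain ⊓ Submodule.span ℂ ({A ⟨x, hx⟩} ∪ Set.range xs) = ⊥)
    (hAx : A ⟨x, hx⟩ ∉ Submodule.span ℂ {x}) :
    (∀ y : A.domain, (y : H) ∈ Submodule.span ℂ ({x, A ⟨x, hx⟩} ∪ Set.range xs) →
        A y ∈ Submodule.span ℂ ({x, A ⟨x, hx⟩} ∪ Set.range xs)) ∧
      ¬∃ (y : H) (hy : y ∈ A.domain),
        y ∈ Submodule.span ℂ ({x, A ⟨x, hx⟩} ∪ Set.range xs) ∧ y ≠ 0 ∧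
          ∃ lam : ℂ, A ⟨y, hy⟩ = lam • y := by
  set S := Submodule.span ℂ ({A ⟨x, hx⟩} ∪ Set.range xs) with hS
  have hset : ({x, A ⟨x, hx⟩} ∪ Set.range xs : Set H)
      = {x} ∪ ({A ⟨x, hx⟩} ∪ Set.range xs) := by
    rw [Set.insert_union, Set.singleton_union, Set.singleton_union]
  have key : ∀ y : H, y ∈ A.domain →
      y ∈ Submodule.span ℂ ({x, A ⟨x, hx⟩} ∪ Set.range xs) → ∃ c : ℂ, y = c • x := by
    intro y hyd hyG
    rw [hset, Submodule.span_union] at hyG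
    obtain ⟨a, ha, b, hb, hab⟩ := Submodule.mem_sup.mp hyG
    obtain ⟨c, rfl⟩ := Submodule.mem_span_singleton.mp ha
    have hbd : b ∈ A.domain := by
      have : b = y - c • x := by rw [← hab]; abel
      rw [this]
      exact A.domain.sub_mem hyd (A.domain.smul_mem c hx)
    have : b ∈ (⊥ : Submodule ℂ H) := hdisj ▸ ⟨hbd, hb⟩
    rw [Submodule.mem_bot] at this
    exact ⟨c, by rw [← hab, this, add_zero]⟩
  constructor
  · intro y hyG
    obtain ⟨c, hc⟩ := key y y.2 hyG
    have hy' : y = c • (⟨x, hx⟩ : A.domain) := Subtype.ext hc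
    rw [hy', A.map_smul]
    exact Submodule.smul_mem _ _ (Submodule.subset_span (by simp))
  · rintro ⟨y, hy, hyG, hy0, lam, hlam⟩
    obtain ⟨c, hc⟩ := key y hy hyG
    have hc0 : c ≠ 0 := by rintro rfl; simp at hc; exact hy0 hc
    have hy' : (⟨y, hy⟩ : A.domain) = c • (⟨x, hx⟩ : A.domain) := Subtype.ext hc
    rw [hy', A.map_smul, hc, smul_smul, mul_comm] at hlam
    have hlam' : c • (A ⟨x, hx⟩) = c • (lam • x) := by rw [hlam, mul_smul]
    have : A ⟨x, hx⟩ = lam • x := smul_right_injective H hc0 hlam'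
    exact hAx (this ▸ Submodule.mem_span_singleton.mpr ⟨lam, rfl⟩)
end
end
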